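/- Let V be a finite-dimensional real symplectic vector space with symplectic form σ, and let B = C_{f₁,...,f_k}(S) := {g ∈ V | (σ(f₁,g),...,σ(f_k,g)) ∈ S}, where f₁,...,f_k ∈ V are linearly independent, pairwise σ-orthogonal, S ⊆ ℝ^k is a Borel set, and the invariance group of S in ℝ^k is trivial (Inv_{ℝᵏ}(S) = {0}). Then Inv_V(B) := {v ∈ V | B + rv = B for all r ∈ ℝ} equals {f₁,...,f_k}^⊥ = {v ∈ V | σ(f_j, v) = 0 for all j}, and in particular Inv_V(B) is coisotropic. -/

import Mathlib

open Module

/-- The symplectic orthogonal complement `W^⊥ = {f ∈ V | σ(f,g) = 0 for all g ∈ W}`. -/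
def sympOrth {V : Type*} [AddCommGroup V] [Module ℝ V]
    (σ : V →ₗ[ℝ] V →ₗ[ℝ] ℝ) (W : Submodule ℝ V) : Submodule ℝ V where
  carrier := {f | ∀ g ∈ W, σ f g = 0}
  zero_mem' := by intro g hg; simp
  add_mem' := by intro a b ha hb g hg; simp [ha g hg, hb g hg]
  smul_mem' := by intro c a ha g hg; simp [ha g hg]

/-- The invariance group `Inv(B) = {v | B + rv = B for all r ∈ ℝ}` of a subset `B` of a
real vector space. -/
def InvSet {M : Type*} [AddCommGroup M] [Module ℝ M] (B : Set M) : Set M :=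
  {v | ∀ r : ℝ, (fun x => x + r • v) '' B = B}

/-! The map `g ↦ (σ(f₁,g),…,σ(f_k,g))` is surjective because the `f_j` are independent and `σ`
is nondegenerate, and invariance groups pull back along surjective linear maps; so `Inv_V(B)` is
the preimage of `Inv(S) = {0}`, i.e. `{f₁,…,f_k}^⊥`. This is the `σ`-orthogonal of the isotropic
subspace `span{f_j}`, and its `σ`-orthogonal is that span again, which lies inside it. -/

open Function LinearMap

section InvSet

variable {M N : Type*} [AddCommGroup M] [Module ℝ M] [AddCommGroup N] [Module ℝ N]

theorem image_add_right_preimage (T : M →ₗ[ℝ] N) (S : Set N) (a : M) :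
    (fun x => x + a) '' (T ⁻¹' S) = T ⁻¹' ((fun y => y + T a) '' S) := by
  simp only [Set.image_add_right, Set.preimage_preimage, map_add, map_neg]

theorem invSet_preimage_of_surjective {T : M →ₗ[ℝ] N} (hT : Surjective T) (S : Set N) :
    InvSet (T ⁻¹' S) = T ⁻¹' InvSet S := by
  ext v
  simp only [InvSet, Set.mem_ofPred_eq, Set.mem_preimage, image_add_right_preimage, map_smul,
    (Set.preimage_injective.mpr hT).eq_iff]

end InvSet

theorem LinearMap.pi_surjective_of_linearIndependent {K V ι : Type*} [Field K] [AddCommGroup V]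
    [Module K V] [Finite ι] {φ : ι → Dual K V} (hφ : LinearIndependent K φ) :
    Surjective (LinearMap.pi φ) := by
  have hφ' : LinearIndependent K fun i => ⇑(φ i) :=
    hφ.map' (ltoFun K V K K) (ker_eq_bot.mpr DFunLike.coe_injective)
  rw [← range_eq_top, ← span_flip_eq_top_iff_linearIndependent.mpr hφ',
    ← Submodule.span_eq (range (pi φ)), coe_range]
  rfl

namespace LinearMap.BilinForm

theorem iInf_ker_eq_orthogonal_span {R V ι : Type*} [CommSemiring R] [AddCommMonoid V]
    [Module R V] (B : V →ₗ[R] V →ₗ[R] R) (f : ι → V) :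
    ⨅ j, ker (B (f j)) = orthogonal B (Submodule.span R (Set.range f)) := by
  ext v
  have hv : v ∈ orthogonal B (Submodule.span R (Set.range f)) ↔
      Submodule.span R (Set.range f) ≤ ker (B.flip v) := Iff.rfl
  rw [hv, Submodule.span_le, Set.range_subset_iff, Submodule.mem_iInf]
  rfl

theorem sympOrth_eq_orthogonal {V : Type*} [AddCommGroup V] [Module ℝ V]
    {B : V →ₗ[ℝ] V →ₗ[ℝ] ℝ} (hB : B.IsRefl) (W : Submodule ℝ V) :
    sympOrth B W = orthogonal B W := by
  ext v
  exact forall₂_congr fun w _ => ⟨hB v w, hB w v⟩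

end LinearMap.BilinForm

theorem invSet_of_observable_is_coisotropic
    {V : Type*} [AddCommGroup V] [Module ℝ V] [FiniteDimensional ℝ V]
    (σ : V →ₗ[ℝ] V →ₗ[ℝ] ℝ)
    (halt : ∀ v, σ v v = 0)
    (hnd : ∀ v, (∀ w, σ v w = 0) → v = 0)
    (k : ℕ) (f : Fin k → V)
    (hf : LinearIndependent ℝ f)
    (horth : ∀ i j, σ (f i) (f j) = 0)
    (S : Set (Fin k → ℝ))
    (hSinv : InvSet S = {0}) :
    InvSet {g : V | (fun j => σ (f j) g) ∈ S}
        = ↑(⨅ j, LinearMap.ker (σ (f j))) ∧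
      sympOrth σ (⨅ j, LinearMap.ker (σ (f j))) ≤ ⨅ j, LinearMap.ker (σ (f j)) := by
  have hT : Surjective (LinearMap.pi fun j => σ (f j)) :=
    pi_surjective_of_linearIndependent
      (hf.map' σ (ker_eq_bot'.mpr fun v hv => hnd v fun w => LinearMap.congr_fun hv w))
  refine ⟨?_, ?_⟩
  · change InvSet ((LinearMap.pi fun j => σ (f j)) ⁻¹' S) = _
    rw [invSet_preimage_of_surjective hT, hSinv, ← ker_pi]
    rfl
  · have hrefl : σ.IsRefl := BilinForm.IsAlt.isRefl halt
    have hnondeg : σ.Nondegenerate := hrefl.nondegenerate_iff_separatingLeft.mpr hnd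
    rw [BilinForm.iInf_ker_eq_orthogonal_span, BilinForm.sympOrth_eq_orthogonal hrefl,
      BilinForm.orthogonal_orthogonal hnondeg hrefl, ← BilinForm.iInf_ker_eq_orthogonal_span,
      Submodule.span_le]
    rintro _ ⟨i, rfl⟩
    exact Submodule.mem_iInf _ |>.mpr fun j => horth j i
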